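/- Let Σ be a counting signature with exactly m counting predicates, let Y be a non-negative integer, let 𝔄 be a Y-branching structure interpreting Σ, and let π, π' be 1-types over Σ. If π and π' form a noisy pair in 𝔄, then either the set of elements of A with 1-type π has cardinality at most (mY+1)², or the set of elements of A with 1-type π' has cardinality at most (mY+1)². -/

import Mathlib

/-- A counting signature: finite sets of unary and binary predicate symbols,
with a distinguished finite set of binary predicates (the counting predicates). -/
structure CSig where
  U : Type
  B : Type
  [instU : Fintype U]
  [instDU : DecidableEq U]
  [instB : Fintype B]
  [instDB : DecidableEq B]
  counting : Finset B

attribute [instance] CSig.instU CSig.instDU CSig.instB CSig.instDB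

/-- A structure interpreting a counting signature over domain `A`. -/
structure Struc (σ : CSig) (A : Type) where
  unary : σ.U → A → Bool
  binary : σ.B → A → A → Bool

/-- A 1-type over `σ`: a truth assignment to all literals in the single variable x. -/
structure OneType (σ : CSig) where
  u : σ.U → Bool
  d : σ.B → Bool
deriving DecidableEq, Fintype

/-- A 2-type over `σ`: a truth assignment to all equality-free literals in x, y. -/
structure TwoType (σ : CSig) where
  ux : σ.U → Bool
  uy : σ.U → Bool
  dx : σ.B → Bool
  dy : σ.B → Bool
  rxy : σ.B → Bool
  ryx : σ.B → Bool
deriving DecidableEq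

variable {σ : CSig} {A : Type}

/-- Explicit equivalence of `TwoType σ` with a product, giving finiteness. -/
def TwoType.equivProd (σ : CSig) :
    TwoType σ ≃ ((σ.U → Bool) × (σ.U → Bool) × (σ.B → Bool) × (σ.B → Bool) ×
      (σ.B → Bool) × (σ.B → Bool)) where
  toFun τ := ⟨τ.ux, τ.uy, τ.dx, τ.dy, τ.rxy, τ.ryx⟩
  invFun p := ⟨p.1, p.2.1, p.2.2.1, p.2.2.2.1, p.2.2.2.2.1, p.2.2.2.2.2⟩
  left_inv τ := rfl
  right_inv p := rfl

instance : Fintype (TwoType σ) := Fintype.ofEquiv _ (TwoType.equivProd σ).symm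

/-- The result of transposing x and y in a 2-type. -/
def TwoType.inv (τ : TwoType σ) : TwoType σ := ⟨τ.uy, τ.ux, τ.dy, τ.dx, τ.ryx, τ.rxy⟩

/-- The 1-type (of x) included in a 2-type. -/
def TwoType.tp1 (τ : TwoType σ) : OneType σ := ⟨τ.ux, τ.dx⟩

/-- tp₂(τ) = tp₁(τ⁻¹). -/
def TwoType.tp2 (τ : TwoType σ) : OneType σ := ⟨τ.uy, τ.dy⟩

/-- The 1-type of an element. -/
def Struc.tp1 (S : Struc σ A) (a : A) : OneType σ :=
  ⟨fun p => S.unary p a, fun f => S.binary f a a⟩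

/-- The 2-type of a pair of (distinct) elements. -/
def Struc.tp2 (S : Struc σ A) (a b : A) : TwoType σ :=
  ⟨fun p => S.unary p a, fun p => S.unary p b,
   fun f => S.binary f a a, fun f => S.binary f b b,
   fun f => S.binary f a b, fun f => S.binary f b a⟩

/-- A 2-type is a message-type if it contains f(x,y) for some counting predicate f. -/
def IsMessage (σ : CSig) (τ : TwoType σ) : Prop := ∃ f ∈ σ.counting, τ.rxy f = true

instance : DecidablePred (IsMessage σ) := fun τ => by unfold IsMessage; infer_instance

/-- A message-type whose inverse is also a message-type. -/
def IsInvertible (σ : CSig) (τ : TwoType σ) : Prop := IsMessage σ τ ∧ IsMessage σ τ.inv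

instance : DecidablePred (IsInvertible σ) := fun τ => by unfold IsInvertible; infer_instance

/-- A 2-type is silent if neither it nor its inverse is a message-type. -/
def IsSilent (σ : CSig) (τ : TwoType σ) : Prop := ¬ IsMessage σ τ ∧ ¬ IsMessage σ τ.inv

/-- The (sub)type of message-types over σ. -/
def MsgType (σ : CSig) := {τ : TwoType σ // IsMessage σ τ}

instance : Fintype (MsgType σ) := Subtype.fintype _
instance : DecidableEq (MsgType σ) := fun a b => by
  exact @Subtype.instDecidableEq _ _ (inferInstance) a b

/-- Y-branching: every element sends at most Y messages along each counting predicate. -/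
def Struc.Branching (S : Struc σ A) (Y : ℕ) : Prop :=
  ∀ a : A, ∀ f ∈ σ.counting, {b : A | b ≠ a ∧ S.binary f a b = true}.encard ≤ (Y : ℕ∞)

def Struc.FinitelyBranching (S : Struc σ A) : Prop := ∃ Y : ℕ, S.Branching Y

/-- Chromatic: distinct elements connected by a chain of 1 or 2 invertible
message-types have distinct 1-types. -/
def Struc.Chromatic (S : Struc σ A) : Prop :=
  (∀ a a' : A, a ≠ a' → IsInvertible σ (S.tp2 a a') → S.tp1 a ≠ S.tp1 a') ∧
  (∀ a a' a'' : A, a ≠ a' → a' ≠ a'' → a ≠ a'' →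
     IsInvertible σ (S.tp2 a a') → IsInvertible σ (S.tp2 a' a'') → S.tp1 a ≠ S.tp1 a'')

/-- Z-differentiated: each 1-type is realized either at most once or more than Z times. -/
def Struc.Differentiated (S : Struc σ A) (Z : ℕ) : Prop :=
  ∀ π : OneType σ, {a : A | S.tp1 a = π}.encard ≤ 1 ∨ (Z : ℕ∞) < {a : A | S.tp1 a = π}.encard

/-- π and π' form a noisy pair: no silent 2-type connects an element of 1-type π
to an element of 1-type π'. -/
def NoisyPair (S : Struc σ A) (π π' : OneType σ) : Prop :=
  ¬ ∃ a a' : A, a ≠ a' ∧ S.tp1 a = π ∧ S.tp1 a' = π' ∧ IsSilent σ (S.tp2 a a')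

/-- The Π-profile of a: for each message-type μ, the number of elements b with 1-type
in Π such that tp[a,b] = μ. -/
noncomputable def Struc.pr (S : Struc σ A) (P : Set (OneType σ)) (a : A) : MsgType σ → ℕ∞ :=
  fun μ => {b : A | b ≠ a ∧ S.tp1 b ∈ P ∧ S.tp2 a b = μ.1}.encard

/-- The Π-count of a: for each counting predicate f, the number of elements b ≠ a with
1-type in Π such that f[a,b] holds. -/
noncomputable def Struc.ct (S : Struc σ A) (P : Set (OneType σ)) (a : A) :
    {f : σ.B // f ∈ σ.counting} → ℕ∞ :=
  fun f => {b : A | b ≠ a ∧ S.tp1 b ∈ P ∧ S.binary f.1 a b = true}.encard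

/-- A Π-group: all elements share the same 1-type and the same Π-count. -/
def PiGroup (S : Struc σ A) (P : Set (OneType σ)) (B : Set A) : Prop :=
  ∀ a ∈ B, ∀ b ∈ B, S.tp1 a = S.tp1 b ∧ S.ct P a = S.ct P b

/-- A π-patch: a {π}-group all of whose elements have {π}-profiles agreeing on the
invertible message-types (the first M* coordinates). -/
def PiPatch (S : Struc σ A) (π : OneType σ) (B : Set A) : Prop :=
  PiGroup S {π} B ∧
  ∀ a ∈ B, ∀ b ∈ B, ∀ μ : MsgType σ, IsInvertible σ μ.1 → S.pr {π} a μ = S.pr {π} b μ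

/-- τ is realized in S. -/
def Realizes2 (S : Struc σ A) (τ : TwoType σ) : Prop := ∃ a b : A, a ≠ b ∧ S.tp2 a b = τ

/-- (Π,B)-approximation. -/
def PiBApprox (S S' : Struc σ A) (P : Set (OneType σ)) (B : Set A) : Prop :=
  S'.Chromatic ∧
  (∀ τ : TwoType σ, Realizes2 S' τ → Realizes2 S τ) ∧
  ∀ a : A,
    S'.tp1 a = S.tp1 a ∧
    S'.pr Pᶜ a = S.pr Pᶜ a ∧
    (a ∉ B → S'.pr Set.univ a = S.pr Set.univ a) ∧
    (a ∈ B → S'.ct P a = S.ct P a)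
/-- A star-type: a 1-type together with a vector of multiplicities indexed by the
message-types. -/
structure StarType (σ : CSig) where
  tp : OneType σ
  v : MsgType σ → ℕ
deriving DecidableEq

/-- The defining condition on star-types: v(μ) > 0 implies tp₁(μ) = π. -/
def StarType.IsValid (s : StarType σ) : Prop :=
  ∀ μ : MsgType σ, 0 < s.v μ → μ.1.tp1 = s.tp

/-- The star-type of an element: its 1-type together with its profile. -/
noncomputable def StarOf (S : Struc σ A) (a : A) : StarType σ where
  tp := S.tp1 a
  v := fun μ => ({b : A | b ≠ a ∧ S.tp2 a b = μ.1}.encard).toNat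

/-- X-sparse: at most X distinct star-types are realized. -/
noncomputable def Struc.Sparse (S : Struc σ A) (X : ℕ) : Prop :=
  {st : StarType σ | ∃ a : A, StarOf S a = st}.encard ≤ (X : ℕ∞)

/-- A chromatic star-type: for every 1-type π', the multiplicities of invertible
message-types μ with tp₂(μ) = π' sum to at most 1, and to 0 when π' = tp. -/
def StarType.Chromatic (s : StarType σ) : Prop :=
  ∀ π' : OneType σ,
    (∑ μ ∈ Finset.univ.filter (fun μ : MsgType σ => IsInvertible σ μ.1 ∧ μ.1.tp2 = π'),
        s.v μ) ≤ 1 ∧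
    (π' = s.tp →
      (∑ μ ∈ Finset.univ.filter (fun μ : MsgType σ => IsInvertible σ μ.1 ∧ μ.1.tp2 = π'),
        s.v μ) = 0)

/-- A frame over σ: a finite set of (pairwise distinct) star-types, a set I of
unordered pairs of 1-types, and a choice θ of a silent 2-type for each pair in I. -/
structure Frame (σ : CSig) where
  stars : Finset (StarType σ)
  valid : ∀ s ∈ stars, s.IsValid
  I : Set (Sym2 (OneType σ))
  θ : Sym2 (OneType σ) → TwoType σ
  hθ : ∀ p ∈ I, IsSilent σ (θ p) ∧ Sym2.mk (θ p).tp1 (θ p).tp2 = p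

/-- Y-bounded frame: all star-type multiplicities are at most Y. -/
def Frame.Bounded (F : Frame σ) (Y : ℕ) : Prop :=
  ∀ s ∈ F.stars, ∀ μ : MsgType σ, s.v μ ≤ Y

/-- A chromatic frame: all its star-types are chromatic. -/
def Frame.Chromatic (F : Frame σ) : Prop := ∀ s ∈ F.stars, s.Chromatic

/-- F describes S: the stars of F are exactly the realized star-types; I consists of the
non-noisy pairs of 1-types; and each θ-value is realized. -/
def Describes (F : Frame σ) (S : Struc σ A) : Prop :=
  (∀ st : StarType σ, st ∈ F.stars ↔ ∃ a : A, StarOf S a = st) ∧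
  (∀ π π' : OneType σ, Sym2.mk π π' ∈ F.I ↔ ¬ NoisyPair S π π') ∧
  (∀ p ∈ F.I, ∃ a b : A, a ≠ b ∧ S.tp2 a b = F.θ p)

/-- The number M* of invertible message-types over σ. -/
def MstarCard (σ : CSig) : ℕ :=
  (Finset.univ.filter (fun μ : MsgType σ => IsInvertible σ μ.1)).card

/-- p_{ik} = 1: the star-type sends no message to any element of 1-type π. -/
def PZero (s : StarType σ) (π : OneType σ) : Prop :=
  ∀ μ : MsgType σ, μ.1.tp2 = π → s.v μ = 0

instance (s : StarType σ) (π : OneType σ) : Decidable (PZero s π) := by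
  unfold PZero; infer_instance

/-- r_{ik}: total multiplicity of non-invertible message-types with tp₂ = π. -/
def RCoeff (s : StarType σ) (π : OneType σ) : ℕ :=
  ∑ μ ∈ Finset.univ.filter (fun μ : MsgType σ => ¬ IsInvertible σ μ.1 ∧ μ.1.tp2 = π), s.v μ

/-- s_{ik}: total multiplicity of message-types with tp₂ = π. -/
def SCoeff (s : StarType σ) (π : OneType σ) : ℕ :=
  ∑ μ ∈ Finset.univ.filter (fun μ : MsgType σ => μ.1.tp2 = π), s.v μ

/-- u_i = Σ_k o_{ik} w_k. -/
def Frame.uVal (F : Frame σ) (w : StarType σ → ℕ) (π : OneType σ) : ℕ :=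
  ∑ s ∈ F.stars.filter (fun s => s.tp = π), w s

/-- v_j = Σ_k q_{jk} w_k. -/
def Frame.vVal (F : Frame σ) (w : StarType σ → ℕ) (μ : MsgType σ) : ℕ :=
  ∑ s ∈ F.stars, s.v μ * w s

/-- x_{ii'} = Σ_k o_{ik} p_{i'k} w_k. -/
def Frame.xVal (F : Frame σ) (w : StarType σ → ℕ) (π π' : OneType σ) : ℕ :=
  ∑ s ∈ F.stars.filter (fun s => s.tp = π ∧ PZero s π'), w s

/-- w is a Z-solution of F (conditions C1–C6, over positive integers). -/
def IsZSolution (F : Frame σ) (Z : ℕ) (w : StarType σ → ℕ) : Prop :=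
  (∀ s ∈ F.stars, 0 < w s) ∧
  (∀ μ μ' : MsgType σ, IsInvertible σ μ.1 → μ'.1 = μ.1.inv → F.vVal w μ = F.vVal w μ') ∧
  (∀ π : OneType σ, ∀ s ∈ F.stars, SCoeff s π ≤ F.uVal w π) ∧
  (∀ π : OneType σ, F.uVal w π ≤ 1 ∨ Z < F.uVal w π) ∧
  (∀ π π' : OneType σ, ∀ s ∈ F.stars, s.tp = π →
     (1 < F.uVal w π ∨ RCoeff s π' ≤ F.xVal w π' π)) ∧
  (∀ π π' : OneType σ, Sym2.mk π π' ∉ F.I → F.uVal w π ≤ 1 ∨ F.uVal w π' ≤ 1) ∧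
  (∀ π π' : OneType σ, ∀ s ∈ F.stars, Sym2.mk π π' ∉ F.I → s.tp = π →
     (1 < F.uVal w π ∨ F.xVal w π' π ≤ RCoeff s π'))

/-- u_i over ℕ* = ℕ ∪ {ℵ₀}. -/
def Frame.uValE (F : Frame σ) (w : StarType σ → ℕ∞) (π : OneType σ) : ℕ∞ :=
  ∑ s ∈ F.stars.filter (fun s => s.tp = π), w s

/-- v_j over ℕ*. -/
def Frame.vValE (F : Frame σ) (w : StarType σ → ℕ∞) (μ : MsgType σ) : ℕ∞ :=
  ∑ s ∈ F.stars, (s.v μ : ℕ∞) * w s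

/-- x_{ii'} over ℕ*. -/
def Frame.xValE (F : Frame σ) (w : StarType σ → ℕ∞) (π π' : OneType σ) : ℕ∞ :=
  ∑ s ∈ F.stars.filter (fun s => s.tp = π ∧ PZero s π'), w s

/-- w is an extended Z-solution of F: a Z-solution over ℕ* = ℕ ∪ {ℵ₀}
(with nonzero components). -/
def IsExtZSolution (F : Frame σ) (Z : ℕ) (w : StarType σ → ℕ∞) : Prop :=
  (∀ s ∈ F.stars, w s ≠ 0) ∧
  (∀ μ μ' : MsgType σ, IsInvertible σ μ.1 → μ'.1 = μ.1.inv → F.vValE w μ = F.vValE w μ') ∧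
  (∀ π : OneType σ, ∀ s ∈ F.stars, (SCoeff s π : ℕ∞) ≤ F.uValE w π) ∧
  (∀ π : OneType σ, F.uValE w π ≤ 1 ∨ (Z : ℕ∞) < F.uValE w π) ∧
  (∀ π π' : OneType σ, ∀ s ∈ F.stars, s.tp = π →
     (1 < F.uValE w π ∨ (RCoeff s π' : ℕ∞) ≤ F.xValE w π' π)) ∧
  (∀ π π' : OneType σ, Sym2.mk π π' ∉ F.I → F.uValE w π ≤ 1 ∨ F.uValE w π' ≤ 1) ∧
  (∀ π π' : OneType σ, ∀ s ∈ F.stars, Sym2.mk π π' ∉ F.I → s.tp = π →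
     (1 < F.uValE w π ∨ F.xValE w π' π ≤ (RCoeff s π' : ℕ∞)))

/-- The data of a normal-form sentence φ*: a quantifier-free equality-free α(x)
(given semantically by the set of 1-types entailing it), a quantifier-free
equality-free β(x,y) (given by the set of 2-types entailing it), and positive
counts C_h for the counting predicates. -/
structure NormalForm (σ : CSig) where
  alpha : OneType σ → Prop
  beta : TwoType σ → Prop
  C : σ.B → ℕ
  hC : ∀ f ∈ σ.counting, 0 < C f

/-- S ⊨ φ*. -/
def SatNF (N : NormalForm σ) (S : Struc σ A) : Prop :=
  (∀ a : A, N.alpha (S.tp1 a)) ∧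
  (∀ a b : A, a ≠ b → N.beta (S.tp2 a b)) ∧
  (∀ f ∈ σ.counting, ∀ a : A,
     {b : A | b ≠ a ∧ S.binary f a b = true}.encard = (N.C f : ℕ∞))

/-- F ⊨ φ*. -/
def FrameSatNF (N : NormalForm σ) (F : Frame σ) : Prop :=
  (∀ s ∈ F.stars, N.alpha s.tp) ∧
  (∀ s ∈ F.stars, ∀ μ : MsgType σ, 0 < s.v μ → N.beta μ.1 ∧ N.beta μ.1.inv) ∧
  (∀ p ∈ F.I, N.beta (F.θ p) ∧ N.beta ((F.θ p).inv)) ∧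
  (∀ s ∈ F.stars, ∀ f ∈ σ.counting,
     (∑ μ ∈ Finset.univ.filter (fun μ : MsgType σ => μ.1.rxy f = true), s.v μ) = N.C f)

/-- The signature obtained from σ by adding k new unary predicates; the counting
predicates are unchanged. -/
def addUnary (σ : CSig) (k : ℕ) : CSig where
  U := σ.U ⊕ Fin k
  B := σ.B
  counting := σ.counting

/-- S' (interpreting σ with k extra unary predicates) is an expansion of S:
it agrees with S on all predicates of σ. -/
def IsExpansion {σ : CSig} {k : ℕ} {A : Type} (S' : Struc (addUnary σ k) A)
    (S : Struc σ A) : Prop :=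
  (∀ (p : σ.U) (a : A), S'.unary (Sum.inl p) a = S.unary p a) ∧
  (∀ (f : σ.B) (a b : A), S'.binary f a b = S.binary f a b)

/-!
Every element sends messages to at most `mY` others. Pick `mY + 1` elements of 1-type `π`:
together with all their message targets they form at most `(mY + 1)²` elements, so if `π'` is
realized more often, some `a'` of 1-type `π'` lies outside this set. As `a'` sends messages to at
most `mY` elements, one of the chosen elements `a` receives none from `a'`, and `tp[a, a']` is
silent.
-/

theorem Finset.set_encard_biUnion_le_card_mul {ι α : Type*} (t : Finset ι) (s : ι → Set α)
    {k : ℕ∞} (hs : ∀ i ∈ t, (s i).encard ≤ k) : (⋃ i ∈ t, s i).encard ≤ t.card * k := by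
  calc (⋃ i ∈ t, s i).encard ≤ ∑ i ∈ t, (s i).encard := t.set_encard_biUnion_le s
    _ ≤ t.card • k := Finset.sum_le_card_nsmul t _ k hs
    _ = t.card * k := nsmul_eq_mul _ _

theorem exists_pair_not_mem_of_encard_le {α : Type*} (N : α → Set α) (k : ℕ)
    (hN : ∀ a, (N a).encard ≤ k) {P P' : Set α} (hP : ((k + 1 : ℕ) : ℕ∞) ≤ P.encard)
    (hP' : (((k + 1) ^ 2 : ℕ) : ℕ∞) < P'.encard) :
    ∃ a ∈ P, ∃ a' ∈ P', a ≠ a' ∧ a' ∉ N a ∧ a ∉ N a' := by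
  obtain ⟨P₀, hP₀P, hP₀card⟩ := Set.exists_subset_encard_eq hP
  obtain ⟨t, rfl⟩ := (Set.finite_of_encard_eq_coe hP₀card).exists_finset_coe
  rw [Set.encard_coe_eq_coe_finsetCard, Nat.cast_inj] at hP₀card
  have hB : ((t : Set α) ∪ ⋃ a ∈ t, N a).encard ≤ (((k + 1) ^ 2 : ℕ) : ℕ∞) := by
    calc ((t : Set α) ∪ ⋃ a ∈ t, N a).encard
        ≤ (t : Set α).encard + (⋃ a ∈ t, N a).encard := Set.encard_union_le _ _
      _ ≤ t.card + t.card * k := by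
          rw [Set.encard_coe_eq_coe_finsetCard]
          gcongr
          exact t.set_encard_biUnion_le_card_mul N fun a _ => hN a
      _ = (((k + 1) ^ 2 : ℕ) : ℕ∞) := by rw [hP₀card]; push_cast; ring
  have hP'B : ¬ P' ⊆ (t : Set α) ∪ ⋃ a ∈ t, N a := fun h =>
    ((Set.encard_mono h).trans hB).not_gt hP'
  obtain ⟨a', ha'P', ha'B⟩ := Set.not_subset.mp hP'B
  have ht : ¬ (t : Set α) ⊆ N a' := fun h => by
    have := (Set.encard_mono h).trans (hN a')
    rw [Set.encard_coe_eq_coe_finsetCard, hP₀card, Nat.cast_le] at this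
    omega
  obtain ⟨a, hat, haN⟩ := Set.not_subset.mp ht
  refine ⟨a, hP₀P hat, a', ha'P', fun h => ha'B (.inl (h ▸ hat)), fun h => ha'B (.inr ?_), haN⟩
  exact Set.mem_biUnion hat h

def Struc.msgTargets (S : Struc σ A) (a : A) : Set A :=
  ⋃ f ∈ σ.counting, {b | b ≠ a ∧ S.binary f a b = true}

theorem Struc.Branching.encard_msgTargets_le {S : Struc σ A} {Y : ℕ} (hbr : S.Branching Y)
    (a : A) : (S.msgTargets a).encard ≤ (σ.counting.card * Y : ℕ) := by
  rw [Nat.cast_mul]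
  exact σ.counting.set_encard_biUnion_le_card_mul _ (hbr a)

theorem Struc.isSilent_tp2 (S : Struc σ A) {a b : A} (hab : a ≠ b) (hb : b ∉ S.msgTargets a)
    (ha : a ∉ S.msgTargets b) : IsSilent σ (S.tp2 a b) := by
  constructor
  · rintro ⟨f, hf, hfab⟩
    exact hb (Set.mem_biUnion hf ⟨hab.symm, hfab⟩)
  · rintro ⟨f, hf, hfba⟩
    exact ha (Set.mem_biUnion hf ⟨hab, hfba⟩)

theorem noisy_pair_card_general (σ : CSig) (m Y : ℕ) (hm : σ.counting.card = m)
    (A : Type) (S : Struc σ A) (hbr : S.Branching Y)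
    (π π' : OneType σ) (h : NoisyPair S π π') :
    {a : A | S.tp1 a = π}.encard ≤ (((m * Y + 1) ^ 2 : ℕ) : ℕ∞) ∨
      {a : A | S.tp1 a = π'}.encard ≤ (((m * Y + 1) ^ 2 : ℕ) : ℕ∞) := by
  by_contra! ⟨hπ, hπ'⟩
  have hπ_ge : ((m * Y + 1 : ℕ) : ℕ∞) ≤ {a : A | S.tp1 a = π}.encard :=
    le_trans (by exact_mod_cast Nat.le_self_pow two_ne_zero _) hπ.le
  obtain ⟨a, rfl, a', ha', hne, ha'a, haa'⟩ :=
    exists_pair_not_mem_of_encard_le S.msgTargets (m * Y) (hm ▸ hbr.encard_msgTargets_le)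
      hπ_ge hπ'
  exact h ⟨a, a', hne, rfl, ha', S.isSilent_tp2 hne ha'a haa'⟩

/-- Lemma 5 (noisy pairs): if π and π' form a noisy pair in a Y-branching structure,
then one of the two 1-types is realized at most (mY+1)² times. -/
theorem noisy_pair_card (σ : CSig) (m Y : ℕ) (hm : σ.counting.card = m)
    (A : Type) [Countable A] (S : Struc σ A) (hbr : S.Branching Y)
    (π π' : OneType σ) (h : NoisyPair S π π') :
    {a : A | S.tp1 a = π}.encard ≤ (((m * Y + 1) ^ 2 : ℕ) : ℕ∞) ∨
      {a : A | S.tp1 a = π'}.encard ≤ (((m * Y + 1) ^ 2 : ℕ) : ℕ∞) :=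
  noisy_pair_card_general σ m Y hm A S hbr π π' h
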